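/- arXiv:1807.11217 — 6 statements merged into one kernel-verified Lean document; each statement's English description precedes it below -/
import Mathlib

section
/- Let f(x) = ax/(x²+a) over ℚ_p with a ≠ 0, A = |a|_p, and r a value with 0 < r and r² < A. Then the sphere S_r(0) = {x ∈ ℚ_p : |x|_p = r} is invariant under f: for every x with |x|_p = r one has |f(x)|_p = r. Consequently every iterate f^n(x) lies in S_r(0). -/
/-! For `‖x‖² < ‖a‖` the ultrametric inequality is an equality on `x² + a`, so the denominator of
`f x = a x / (x² + a)` has norm `‖a‖`, which cancels against the numerator and leaves `‖f x‖ = ‖x‖`.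
Hence `f` maps the sphere of radius `r` into itself whenever `r² < ‖a‖`, and so do its iterates. -/

open Metric

section Ultrametric

variable {K : Type*} [NormedField K] [IsUltrametricDist K]

lemma norm_sq_add_eq_of_norm_sq_lt {a x : K} (h : ‖x‖ ^ 2 < ‖a‖) : ‖x ^ 2 + a‖ = ‖a‖ := by
  rw [IsUltrametricDist.norm_add_eq_max_of_norm_ne_norm (by rw [norm_pow]; exact h.ne),
    norm_pow, max_eq_right h.le]

lemma norm_mul_div_sq_add_eq_of_norm_sq_lt {a x : K} (h : ‖x‖ ^ 2 < ‖a‖) :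
    ‖a * x / (x ^ 2 + a)‖ = ‖x‖ := by
  have ha : ‖a‖ ≠ 0 := ((sq_nonneg _).trans_lt h).ne'
  rw [norm_div, norm_mul, norm_sq_add_eq_of_norm_sq_lt h, mul_div_cancel_left₀ _ ha]

lemma mapsTo_mul_div_sq_add_sphere {a : K} {r : ℝ} (hr : r ^ 2 < ‖a‖) :
    Set.MapsTo (fun y : K => a * y / (y ^ 2 + a)) (sphere 0 r) (sphere 0 r) := fun x hx => by
  rw [mem_sphere_zero_iff_norm] at hx ⊢
  subst hx
  exact norm_mul_div_sq_add_eq_of_norm_sq_lt hr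

end Ultrametric

theorem stmt6_general (p : ℕ) [Fact p.Prime] (a : ℚ_[p]) (r : ℝ)
    (hrA : r ^ 2 < ‖a‖) :
    ∀ x : ℚ_[p], ‖x‖ = r →
      ‖a * x / (x ^ 2 + a)‖ = r ∧
      ∀ n : ℕ, ‖(fun y : ℚ_[p] => a * y / (y ^ 2 + a))^[n] x‖ = r := by
  intro x hx
  have hmaps := mapsTo_mul_div_sq_add_sphere hrA
  have hx' : x ∈ sphere (0 : ℚ_[p]) r := mem_sphere_zero_iff_norm.mpr hx
  exact ⟨mem_sphere_zero_iff_norm.mp (hmaps hx'),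
    fun n => mem_sphere_zero_iff_norm.mp (hmaps.iterate n hx')⟩

/-- For 0 < r with r² < A = |a|, the sphere S_r(0) is invariant under
f(x) = ax/(x²+a), and hence all iterates stay on it. -/
theorem stmt6 (p : ℕ) [Fact p.Prime] (a : ℚ_[p]) (ha : a ≠ 0) (r : ℝ)
    (hr : 0 < r) (hrA : r ^ 2 < ‖a‖) :
    ∀ x : ℚ_[p], ‖x‖ = r →
      ‖a * x / (x ^ 2 + a)‖ = r ∧
      ∀ n : ℕ, ‖(fun y : ℚ_[p] => a * y / (y ^ 2 + a))^[n] x‖ = r :=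
  stmt6_general p a r hrA
end

section
/- Let f(x) = ax/(x²+a) over ℚ_p with a ≠ 0 and A = |a|_p. If |x|_p² > A, then for all n ≥ 1, |f^n(x)|_p = A/|x|_p. (After one step the orbit enters the invariant sphere of radius A/|x|_p < √A and stays there.) -/
/-!
By the isosceles property of an ultrametric norm, `‖y² + a‖ = max ‖y‖² ‖a‖` as soon as
`‖y‖² ≠ ‖a‖`. When `‖x‖² > ‖a‖` the first step therefore has norm `‖a‖ ‖x‖ / ‖x‖² = ‖a‖ / ‖x‖`,
whose square is `< ‖a‖`; and on the region `‖y‖² < ‖a‖` the denominator has norm `‖a‖`, so the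
map preserves `‖y‖` and the orbit never leaves that sphere.
-/

open IsUltrametricDist

section Ultrametric

variable {K : Type*} [NormedField K] [IsUltrametricDist K]

lemma norm_sq_add_eq_max {a y : K} (h : ‖y‖ ^ 2 ≠ ‖a‖) :
    ‖y ^ 2 + a‖ = max (‖y‖ ^ 2) ‖a‖ := by
  rw [norm_add_eq_max_of_norm_ne_norm (by rwa [norm_pow]), norm_pow]

lemma norm_mul_div_sq_add_of_norm_sq_lt {a y : K} (h : ‖y‖ ^ 2 < ‖a‖) :
    ‖a * y / (y ^ 2 + a)‖ = ‖y‖ := by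
  have ha : ‖a‖ ≠ 0 := (h.trans_le' (sq_nonneg _)).ne'
  rw [norm_div, norm_mul, norm_sq_add_eq_max h.ne, max_eq_right h.le, mul_div_cancel_left₀ _ ha]

lemma norm_mul_div_sq_add_of_norm_lt_sq {a y : K} (h : ‖a‖ < ‖y‖ ^ 2) :
    ‖a * y / (y ^ 2 + a)‖ = ‖a‖ / ‖y‖ := by
  have hy : 0 < ‖y‖ := by nlinarith [norm_nonneg a, norm_nonneg y]
  rw [norm_div, norm_mul, norm_sq_add_eq_max h.ne', max_eq_left h.le]
  field_simp

lemma norm_iterate_mul_div_sq_add_of_norm_sq_lt {a y : K} (h : ‖y‖ ^ 2 < ‖a‖) (n : ℕ) :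
    ‖(fun y : K => a * y / (y ^ 2 + a))^[n] y‖ = ‖y‖ := by
  induction n with
  | zero => rfl
  | succ n ih =>
    rw [Function.iterate_succ_apply', norm_mul_div_sq_add_of_norm_sq_lt (by rwa [ih]), ih]

end Ultrametric

/-- If |x|² > A = |a| then |fⁿ(x)| = A/|x| for all n ≥ 1. -/
theorem stmt7 (p : ℕ) [Fact p.Prime] (a : ℚ_[p]) (ha : a ≠ 0) (x : ℚ_[p])
    (hx : ‖a‖ < ‖x‖ ^ 2) :
    ∀ n : ℕ, 1 ≤ n → ‖(fun y : ℚ_[p] => a * y / (y ^ 2 + a))^[n] x‖ = ‖a‖ / ‖x‖ := by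
  intro n hn
  have hfx := norm_mul_div_sq_add_of_norm_lt_sq hx
  have hA : 0 < ‖a‖ := norm_pos_iff.mpr ha
  have hx0 : 0 < ‖x‖ := by nlinarith [norm_nonneg x]
  have hsq_lt : (‖a‖ / ‖x‖) ^ 2 < ‖a‖ := by
    rw [div_pow, div_lt_iff₀ (by positivity)]
    simpa only [sq] using mul_lt_mul_of_pos_left hx hA
  obtain ⟨m, rfl⟩ := Nat.exists_eq_add_of_le' hn
  rw [Function.iterate_succ_apply, norm_iterate_mul_div_sq_add_of_norm_sq_lt (hfx ▸ hsq_lt), hfx]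
end

section
/- Let f(x) = ax/(x²+a) over ℚ_p with a ≠ 0, A = |a|_p, and let r satisfy 0 < r, r² < A. For any c with |c|_p = r and any x with |x − c|_p ≤ ρ ≤ r, we have |f(x) − f(c)|_p = |x − c|_p. In particular f maps the closed ball V_ρ(c) ⊆ S_r(0) onto the closed ball V_ρ(f(c)), and f is an isometry on each invariant sphere. -/
/-!
Write `f x = a x / (x² + a)`. On the ball `‖x‖ ≤ r` with `r² < ‖a‖` every product of two points
has norm `< ‖a‖`, so by the isosceles property `‖x² + a‖ = ‖a - x y‖ = ‖a‖`, and the identity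
`f x - f y = (x - y) · a (a - x y) / ((x² + a)(y² + a))` makes `f` an isometry there.
A preimage of `y` under `f` is a fixed point of `x ↦ y (x² + a) / a`, which contracts the ball
`V_ρ(c)` with ratio `r² / ‖a‖ < 1`; when `y ∈ V_ρ(f c)` it maps `V_ρ(c)` into itself, so
Banach's fixed point theorem yields the preimage.
-/

open Metric Set

namespace IsUltrametricDist

lemma closedBall_subset_closedBall_zero {E : Type*} [SeminormedAddCommGroup E]
    [IsUltrametricDist E] {c : E} {ρ r : ℝ} (hc : ‖c‖ ≤ r) (hρ : ρ ≤ r) :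
    closedBall c ρ ⊆ closedBall 0 r :=
  (closedBall_subset_closedBall hρ).trans (closedBall_eq_of_mem (mem_closedBall_zero_iff.2 hc)).ge

lemma exists_fixedPoint_closedBall {X : Type*} [MetricSpace X] [IsUltrametricDist X]
    [CompleteSpace X] {T : X → X} {K : NNReal} (hK : K < 1) {c : X} {ρ : ℝ}
    (hT : LipschitzOnWith K T (closedBall c ρ)) (hc : dist (T c) c ≤ ρ) :
    ∃ x ∈ closedBall c ρ, T x = x := by
  have hcc : c ∈ closedBall c ρ := mem_closedBall_self (dist_nonneg.trans hc)
  have hmaps : MapsTo T (closedBall c ρ) (closedBall c ρ) := fun x hx =>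
    (dist_triangle_max _ (T c) _).trans <| max_le
      ((lipschitzOnWith_iff_dist_le_mul.1 hT x hx c hcc).trans
        (mul_le_of_le_one_left dist_nonneg (NNReal.coe_le_one.2 hK.le) |>.trans hx)) hc
  obtain ⟨x, hx, hfix, -⟩ := ContractingWith.exists_fixedPoint' isClosed_closedBall.isComplete
    hmaps ⟨hK, hT.mapsToRestrict hmaps⟩ hcc (edist_ne_top _ _)
  exact ⟨x, hx, hfix⟩

end IsUltrametricDist

open IsUltrametricDist

lemma div_sq_add_sub_div_sq_add {F : Type*} [Field F] {a x y : F}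
    (hx : x ^ 2 + a ≠ 0) (hy : y ^ 2 + a ≠ 0) :
    a * x / (x ^ 2 + a) - a * y / (y ^ 2 + a) =
      (x - y) * (a * (a - x * y)) / ((x ^ 2 + a) * (y ^ 2 + a)) := by
  field_simp
  ring

section UltrametricField

variable {K : Type*} [NormedField K] [IsUltrametricDist K] {a : K} {r : ℝ}

lemma norm_sub_mul_eq_norm (hrA : r ^ 2 < ‖a‖) {x y : K} (hx : ‖x‖ ≤ r) (hy : ‖y‖ ≤ r) :
    ‖a - x * y‖ = ‖a‖ := by
  have hxy : ‖-(x * y)‖ < ‖a‖ := by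
    rw [norm_neg, norm_mul]
    nlinarith [norm_nonneg x, norm_nonneg y]
  rw [sub_eq_add_neg, norm_add_eq_max_of_norm_ne_norm hxy.ne', max_eq_left hxy.le]

lemma norm_sq_add_eq_norm (hrA : r ^ 2 < ‖a‖) {x : K} (hx : ‖x‖ ≤ r) : ‖x ^ 2 + a‖ = ‖a‖ := by
  have h := norm_sub_mul_eq_norm hrA hx (y := -x) (by rwa [norm_neg])
  rwa [mul_neg, sub_neg_eq_add, ← sq, add_comm] at h

lemma norm_div_sq_add_sub_div_sq_add (hrA : r ^ 2 < ‖a‖) {x y : K} (hx : ‖x‖ ≤ r)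
    (hy : ‖y‖ ≤ r) : ‖a * x / (x ^ 2 + a) - a * y / (y ^ 2 + a)‖ = ‖x - y‖ := by
  have ha : ‖a‖ ≠ 0 := ((sq_nonneg r).trans_lt hrA).ne'
  have hxa := norm_sq_add_eq_norm hrA hx
  have hya := norm_sq_add_eq_norm hrA hy
  rw [div_sq_add_sub_div_sq_add (norm_ne_zero_iff.1 (by rwa [hxa]))
      (norm_ne_zero_iff.1 (by rwa [hya])),
    norm_div, norm_mul, norm_mul, norm_mul, hxa, hya, norm_sub_mul_eq_norm hrA hx hy]
  field_simp

lemma lipschitzOnWith_mul_sq_add_div (hrA : r ^ 2 < ‖a‖) {y : K} (hy : ‖y‖ ≤ r) :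
    LipschitzOnWith (r ^ 2 / ‖a‖).toNNReal (fun x => y * (x ^ 2 + a) / a) (closedBall 0 r) := by
  have ha : 0 < ‖a‖ := (sq_nonneg r).trans_lt hrA
  refine LipschitzOnWith.of_dist_le_mul fun x hx z hz => ?_
  rw [mem_closedBall_zero_iff] at hx hz
  have hxz : ‖x + z‖ ≤ r := (norm_add_le_max x z).trans (max_le hx hz)
  have hr : 0 ≤ r := (norm_nonneg x).trans hx
  rw [Real.coe_toNNReal _ (by positivity), dist_eq_norm, dist_eq_norm,
    show y * (x ^ 2 + a) / a - y * (z ^ 2 + a) / a = y * (x + z) * (x - z) / a by ring,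
    norm_div, norm_mul, norm_mul, div_mul_eq_mul_div, sq]
  gcongr

lemma exists_div_sq_add_eq [CompleteSpace K] (hrA : r ^ 2 < ‖a‖) {c : K} {ρ : ℝ}
    (hc : ‖c‖ ≤ r) (hρ : ρ ≤ r) {y : K} (hy : y ∈ closedBall (a * c / (c ^ 2 + a)) ρ) :
    ∃ x ∈ closedBall c ρ, a * x / (x ^ 2 + a) = y := by
  have ha : ‖a‖ ≠ 0 := ((sq_nonneg r).trans_lt hrA).ne'
  have ha0 : a ≠ 0 := norm_ne_zero_iff.1 ha
  have hca := norm_sq_add_eq_norm hrA hc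
  have hca0 : c ^ 2 + a ≠ 0 := norm_ne_zero_iff.1 (by rwa [hca])
  have hfc : ‖a * c / (c ^ 2 + a)‖ ≤ r := by
    have h := norm_div_sq_add_sub_div_sq_add hrA hc (y := 0)
      (norm_zero.trans_le ((norm_nonneg c).trans hc))
    simp only [mul_zero, zero_div, sub_zero] at h
    exact h.le.trans hc
  have hyr : ‖y‖ ≤ r := mem_closedBall_zero_iff.1 (closedBall_subset_closedBall_zero hfc hρ hy)
  have hTc : dist (y * (c ^ 2 + a) / a) c ≤ ρ := by
    rw [dist_eq_norm,
      show y * (c ^ 2 + a) / a - c = (c ^ 2 + a) / a * (y - a * c / (c ^ 2 + a)) by field_simp,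
      norm_mul, norm_div, hca, div_self ha, one_mul, ← dist_eq_norm]
    exact hy
  obtain ⟨x, hx, hfix⟩ := exists_fixedPoint_closedBall (T := fun x => y * (x ^ 2 + a) / a)
    (Real.toNNReal_lt_one.2 ((div_lt_one (norm_pos_iff.2 ha0)).2 hrA))
    ((lipschitzOnWith_mul_sq_add_div hrA hyr).mono (closedBall_subset_closedBall_zero hc hρ)) hTc
  refine ⟨x, hx, ?_⟩
  have hxa : x ^ 2 + a ≠ 0 := norm_ne_zero_iff.1 (by
    rwa [norm_sq_add_eq_norm hrA (mem_closedBall_zero_iff.1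
      (closedBall_subset_closedBall_zero hc hρ hx))])
  have hfix : y * (x ^ 2 + a) / a = x := hfix
  field_simp at hfix ⊢
  linear_combination -hfix

theorem image_closedBall_div_sq_add [CompleteSpace K] (hrA : r ^ 2 < ‖a‖) {c : K} {ρ : ℝ}
    (hc : ‖c‖ ≤ r) (hρ : ρ ≤ r) :
    (fun x => a * x / (x ^ 2 + a)) '' closedBall c ρ = closedBall (a * c / (c ^ 2 + a)) ρ := by
  refine Subset.antisymm ?_ fun y hy => exists_div_sq_add_eq hrA hc hρ hy
  rintro _ ⟨x, hx, rfl⟩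
  rw [mem_closedBall_iff_norm, norm_div_sq_add_sub_div_sq_add hrA
    (mem_closedBall_zero_iff.1 (closedBall_subset_closedBall_zero hc hρ hx)) hc]
  exact mem_closedBall_iff_norm.1 hx

end UltrametricField

theorem stmt10_general (p : ℕ) [Fact p.Prime] (a : ℚ_[p]) (r ρ : ℝ)
    (hrA : r ^ 2 < ‖a‖) (hρr : ρ ≤ r)
    (c : ℚ_[p]) (hc : ‖c‖ = r) :
    (∀ x : ℚ_[p], ‖x - c‖ ≤ ρ →
      ‖a * x / (x ^ 2 + a) - a * c / (c ^ 2 + a)‖ = ‖x - c‖) ∧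
    (fun x : ℚ_[p] => a * x / (x ^ 2 + a)) '' {x : ℚ_[p] | ‖x - c‖ ≤ ρ} =
      {y : ℚ_[p] | ‖y - a * c / (c ^ 2 + a)‖ ≤ ρ} := by
  have hball (z : ℚ_[p]) : {x : ℚ_[p] | ‖x - z‖ ≤ ρ} = closedBall z ρ :=
    ext fun _ => mem_closedBall_iff_norm.symm
  refine ⟨fun x hx => norm_div_sq_add_sub_div_sq_add hrA ?_ hc.le, ?_⟩
  · exact mem_closedBall_zero_iff.1
      (closedBall_subset_closedBall_zero hc.le hρr (mem_closedBall_iff_norm.2 hx))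
  · rw [hball, hball]
    exact image_closedBall_div_sq_add hrA hc.le hρr

/-- On an invariant sphere S_r(0) (0 < r, r² < A), f is an isometry
on balls: |f(x) − f(c)| = |x − c| and f(V_ρ(c)) = V_ρ(f(c)) for ρ ≤ r. -/
theorem stmt10 (p : ℕ) [Fact p.Prime] (a : ℚ_[p]) (ha : a ≠ 0) (r ρ : ℝ)
    (hr : 0 < r) (hrA : r ^ 2 < ‖a‖) (hρ0 : 0 ≤ ρ) (hρr : ρ ≤ r)
    (c : ℚ_[p]) (hc : ‖c‖ = r) :
    (∀ x : ℚ_[p], ‖x - c‖ ≤ ρ →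
      ‖a * x / (x ^ 2 + a) - a * c / (c ^ 2 + a)‖ = ‖x - c‖) ∧
    (fun x : ℚ_[p] => a * x / (x ^ 2 + a)) '' {x : ℚ_[p] | ‖x - c‖ ≤ ρ} =
      {y : ℚ_[p] | ‖y - a * c / (c ^ 2 + a)‖ ≤ ρ} :=
  stmt10_general p a r ρ hrA hρr c hc
end

section
/- Let f(x) = ax/(x²+a) over ℚ_p with a ≠ 0, A = |a|_p, and c with |c|_p = r, r² < A. Set ρ(r) = r³/A. Then for every n ≥ 1, |f^{n+1}(c) − f^n(c)|_p = ρ(r), and f maps the ball V_{ρ(r)}(c) onto itself: f(V_{ρ(r)}(c)) = V_{ρ(r)}(c). -/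
/-!
Write `f x = x - φ x` with `φ x = x³ / (x² + a)`. When `‖x‖² < ‖a‖` the ultrametric
inequality gives `‖x² + a‖ = ‖a‖`, so `f` preserves the sphere of radius `r`, moves each of
its points by exactly `r³ / ‖a‖`, and `φ` is `r² / ‖a‖`-Lipschitz on the ball of radius `r`.
In a complete ultrametric space, subtracting such a contraction `φ` from the identity maps
`closedBall c ρ` onto itself as soon as `‖φ c‖ ≤ ρ`: the inclusion is the ultrametric
inequality, and a preimage of `y` is the fixed point of the contraction `x ↦ y + φ x`.
-/

open Metric Set IsUltrametricDist NNReal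

section Ultrametric

variable {E : Type*} [NormedAddCommGroup E] [IsUltrametricDist E]

lemma closedBall_subset_closedBall_zero_norm {c : E} {ρ : ℝ} (hρ : ρ ≤ ‖c‖) :
    closedBall c ρ ⊆ closedBall 0 ‖c‖ :=
  (closedBall_subset_closedBall hρ).trans (closedBall_eq_of_mem (by simp)).symm.subset

lemma norm_le_of_lipschitzOnWith_closedBall {φ : E → E} {K : ℝ≥0} (hK : K ≤ 1) {c : E}
    {ρ : ℝ} (hφ : LipschitzOnWith K φ (closedBall c ρ)) (hc : ‖φ c‖ ≤ ρ) {x : E}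
    (hx : x ∈ closedBall c ρ) : ‖φ x‖ ≤ ρ := by
  have hρ : 0 ≤ ρ := (norm_nonneg _).trans hc
  have hdist : ‖φ x - φ c‖ ≤ ρ :=
    calc ‖φ x - φ c‖ ≤ K * ‖x - c‖ := hφ.norm_sub_le hx (mem_closedBall_self hρ)
      _ ≤ 1 * ρ := by gcongr; exacts [hK, mem_closedBall_iff_norm.mp hx]
      _ = ρ := one_mul ρ
  simpa using (norm_add_le_max (φ x - φ c) (φ c)).trans (max_le hdist hc)

theorem image_sub_closedBall_eq [CompleteSpace E] {φ : E → E} {K : ℝ≥0} (hK : K < 1) {c : E}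
    {ρ : ℝ} (hφ : LipschitzOnWith K φ (closedBall c ρ)) (hc : ‖φ c‖ ≤ ρ) :
    (fun x ↦ x - φ x) '' closedBall c ρ = closedBall c ρ := by
  have hφρ {x} (hx : x ∈ closedBall c ρ) : ‖φ x‖ ≤ ρ :=
    norm_le_of_lipschitzOnWith_closedBall hK.le hφ hc hx
  refine (image_subset_iff.mpr fun x hx ↦ ?_).antisymm fun y hy ↦ ?_
  · rw [mem_preimage, mem_closedBall_iff_norm, sub_right_comm, sub_eq_add_neg]
    refine (norm_add_le_max _ _).trans (max_le (mem_closedBall_iff_norm.mp hx) ?_)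
    rw [norm_neg]
    exact hφρ hx
  · have hmaps : MapsTo (fun x ↦ y + φ x) (closedBall c ρ) (closedBall c ρ) := fun x hx ↦ by
      rw [mem_closedBall_iff_norm, add_sub_right_comm]
      exact (norm_add_le_max _ _).trans (max_le (mem_closedBall_iff_norm.mp hy) (hφρ hx))
    have hcontr : ContractingWith K (hmaps.restrict _ _ _) :=
      ⟨hK, hmaps.lipschitzOnWith_iff_restrict.mp fun x hx x' hx' ↦ by
        simpa only [edist_add_left] using hφ hx hx'⟩
    obtain ⟨x, hx, hfix, -⟩ :=
      hcontr.exists_fixedPoint' isClosed_closedBall.isComplete hmaps hy (edist_ne_top _ _)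
    exact ⟨x, hx, sub_eq_of_eq_add hfix.symm⟩

end Ultrametric

section RationalMap

variable {K : Type*} [NormedField K] {a x : K}

lemma norm_sq_lt_of_mem_closedBall {r : ℝ} (hr : r ^ 2 < ‖a‖) (hx : x ∈ closedBall 0 r) :
    ‖x‖ ^ 2 < ‖a‖ :=
  (pow_le_pow_left₀ (norm_nonneg x) (mem_closedBall_zero_iff.mp hx) 2).trans_lt hr

variable [IsUltrametricDist K]

lemma norm_sq_add_eq (hx : ‖x‖ ^ 2 < ‖a‖) : ‖x ^ 2 + a‖ = ‖a‖ := by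
  rw [← norm_pow] at hx
  rw [norm_add_eq_max_of_norm_ne_norm hx.ne, max_eq_right hx.le]

lemma sq_add_ne_zero (hx : ‖x‖ ^ 2 < ‖a‖) : x ^ 2 + a ≠ 0 := by
  rw [← norm_ne_zero_iff, norm_sq_add_eq hx]
  exact ((sq_nonneg _).trans_lt hx).ne'

lemma mul_div_sq_add_eq_sub (hx : ‖x‖ ^ 2 < ‖a‖) :
    a * x / (x ^ 2 + a) = x - x ^ 3 / (x ^ 2 + a) := by
  field_simp [sq_add_ne_zero hx]
  ring

lemma norm_pow_three_div_sq_add (hx : ‖x‖ ^ 2 < ‖a‖) :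
    ‖x ^ 3 / (x ^ 2 + a)‖ = ‖x‖ ^ 3 / ‖a‖ := by
  rw [norm_div, norm_pow, norm_sq_add_eq hx]

lemma norm_mul_div_sq_add_sub_self (hx : ‖x‖ ^ 2 < ‖a‖) :
    ‖a * x / (x ^ 2 + a) - x‖ = ‖x‖ ^ 3 / ‖a‖ := by
  rw [mul_div_sq_add_eq_sub hx, sub_sub_cancel_left, norm_neg, norm_pow_three_div_sq_add hx]

lemma norm_mul_div_sq_add (hx : ‖x‖ ^ 2 < ‖a‖) : ‖a * x / (x ^ 2 + a)‖ = ‖x‖ := by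
  rw [norm_div, norm_mul, norm_sq_add_eq hx, mul_div_cancel_left₀]
  exact ((sq_nonneg _).trans_lt hx).ne'

lemma mapsTo_sphere_mul_div_sq_add {r : ℝ} (hr : r ^ 2 < ‖a‖) :
    MapsTo (fun x ↦ a * x / (x ^ 2 + a)) (sphere 0 r) (sphere 0 r) := fun x hx ↦ by
  rw [mem_sphere_zero_iff_norm] at hx ⊢
  rw [norm_mul_div_sq_add (hx ▸ hr), hx]

lemma lipschitzOnWith_pow_three_div_sq_add {r : ℝ≥0} (hr : (r : ℝ) ^ 2 < ‖a‖) :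
    LipschitzOnWith (r ^ 2 / ‖a‖₊) (fun x ↦ x ^ 3 / (x ^ 2 + a)) (closedBall 0 r) := by
  refine LipschitzOnWith.of_dist_le_mul fun x hx y hy ↦ ?_
  have hxa := norm_sq_lt_of_mem_closedBall hr hx
  have hya := norm_sq_lt_of_mem_closedBall hr hy
  rw [mem_closedBall_zero_iff] at hx hy
  have hxy : ‖x * y‖ ≤ r ^ 2 := by rw [norm_mul, sq]; gcongr
  have hdiff : x ^ 3 / (x ^ 2 + a) - y ^ 3 / (y ^ 2 + a) =
      (x - y) * ((x * y) ^ 2 + a * (x ^ 2 + x * y + y ^ 2)) / ((x ^ 2 + a) * (y ^ 2 + a)) := by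
    field_simp [sq_add_ne_zero hxa, sq_add_ne_zero hya]
    ring
  have hnum : ‖(x * y) ^ 2 + a * (x ^ 2 + x * y + y ^ 2)‖ ≤ ‖a‖ * r ^ 2 := by
    refine (norm_add_le_max _ _).trans (max_le ?_ ?_)
    · rw [norm_pow]
      calc ‖x * y‖ ^ 2 ≤ r ^ 2 * r ^ 2 := by rw [← sq]; gcongr
        _ ≤ ‖a‖ * r ^ 2 := by gcongr
    · rw [norm_mul]
      gcongr
      refine (norm_add_le_max _ _).trans (max_le ((norm_add_le_max _ _).trans (max_le ?_ hxy)) ?_)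
      · rw [norm_pow]; gcongr
      · rw [norm_pow]; gcongr
  have ha : 0 < ‖a‖ := (sq_nonneg _).trans_lt hr
  rw [dist_eq_norm, dist_eq_norm, hdiff, norm_div, norm_mul, norm_mul, norm_sq_add_eq hxa,
    norm_sq_add_eq hya, NNReal.coe_div, NNReal.coe_pow, coe_nnnorm, div_le_iff₀ (by positivity)]
  calc ‖x - y‖ * ‖(x * y) ^ 2 + a * (x ^ 2 + x * y + y ^ 2)‖ ≤ ‖x - y‖ * (‖a‖ * r ^ 2) := by
        gcongr
    _ = r ^ 2 / ‖a‖ * ‖x - y‖ * (‖a‖ * ‖a‖) := by field_simp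

end RationalMap

theorem stmt12_general (p : ℕ) [Fact p.Prime] (a : ℚ_[p]) (r : ℝ)
    (hrA : r ^ 2 < ‖a‖) (c : ℚ_[p]) (hc : ‖c‖ = r) :
    (∀ n : ℕ, 1 ≤ n →
      ‖(fun y : ℚ_[p] => a * y / (y ^ 2 + a))^[n + 1] c -
        (fun y : ℚ_[p] => a * y / (y ^ 2 + a))^[n] c‖ = r ^ 3 / ‖a‖) ∧
    (fun x : ℚ_[p] => a * x / (x ^ 2 + a)) '' {x : ℚ_[p] | ‖x - c‖ ≤ r ^ 3 / ‖a‖} =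
      {x : ℚ_[p] | ‖x - c‖ ≤ r ^ 3 / ‖a‖} := by
  subst hc
  have hsphere (n : ℕ) : ‖(fun y : ℚ_[p] => a * y / (y ^ 2 + a))^[n] c‖ = ‖c‖ :=
    mem_sphere_zero_iff_norm.mp <|
      (mapsTo_sphere_mul_div_sq_add hrA).iterate n (mem_sphere_zero_iff_norm.mpr rfl)
  refine ⟨fun n _ ↦ ?_, ?_⟩
  · rw [Function.iterate_succ_apply', norm_mul_div_sq_add_sub_self (hsphere n ▸ hrA), hsphere n]
  have hball : {x : ℚ_[p] | ‖x - c‖ ≤ ‖c‖ ^ 3 / ‖a‖} = closedBall c (‖c‖ ^ 3 / ‖a‖) := by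
    ext; exact mem_closedBall_iff_norm.symm
  have ha : 0 < ‖a‖ := (sq_nonneg _).trans_lt hrA
  have hsub : closedBall c (‖c‖ ^ 3 / ‖a‖) ⊆ closedBall 0 ‖c‖₊ :=
    closedBall_subset_closedBall_zero_norm <| by
      rw [div_le_iff₀ ha]; nlinarith [norm_nonneg c]
  have hK : ‖c‖₊ ^ 2 / ‖a‖₊ < 1 := by
    rw [div_lt_one (by exact_mod_cast ha)]
    exact_mod_cast hrA
  have hEq : EqOn (fun x ↦ a * x / (x ^ 2 + a)) (fun x ↦ x - x ^ 3 / (x ^ 2 + a))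
      (closedBall c (‖c‖ ^ 3 / ‖a‖)) := fun _ hx ↦
    mul_div_sq_add_eq_sub (norm_sq_lt_of_mem_closedBall hrA (hsub hx))
  rw [hball, hEq.image_eq]
  exact image_sub_closedBall_eq hK ((lipschitzOnWith_pow_three_div_sq_add hrA).mono hsub)
    (norm_pow_three_div_sq_add hrA).le

/-- For c on an invariant sphere S_r(0) (r² < A) and ρ(r) = r³/A:
|f^{n+1}(c) − fⁿ(c)| = ρ(r) for all n ≥ 1, and f maps V_{ρ(r)}(c) onto itself. -/
theorem stmt12 (p : ℕ) [Fact p.Prime] (a : ℚ_[p]) (ha : a ≠ 0) (r : ℝ)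
    (hr : 0 < r) (hrA : r ^ 2 < ‖a‖) (c : ℚ_[p]) (hc : ‖c‖ = r) :
    (∀ n : ℕ, 1 ≤ n →
      ‖(fun y : ℚ_[p] => a * y / (y ^ 2 + a))^[n + 1] c -
        (fun y : ℚ_[p] => a * y / (y ^ 2 + a))^[n] c‖ = r ^ 3 / ‖a‖) ∧
    (fun x : ℚ_[p] => a * x / (x ^ 2 + a)) '' {x : ℚ_[p] | ‖x - c‖ ≤ r ^ 3 / ‖a‖} =
      {x : ℚ_[p] | ‖x - c‖ ≤ r ^ 3 / ‖a‖} :=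
  stmt12_general p a r hrA c hc
end

section
/- Let f(x) = ax/(x²+a) over ℚ_p (or ℂ_p) with a ≠ 0, A = |a|_p. If y₀ → y₁ → ... → y_{k−1} → y₀ is a periodic orbit of f (all iterates defined), then |y₀|_p = |y₁|_p = ... = |y_{k−1}|_p and this common value is ≤ √A. -/
/-!
Put `s = √‖a‖`. By the ultrametric inequality, `‖x² + a‖ = max ‖x‖² ‖a‖` unless `‖x‖ = s`,
so `x ↦ ax / (x² + a)` fixes norms below `s`, sends norms above `s` to `‖a‖ / ‖x‖ < s`, and does
not decrease the norm `s`. An orbit point of norm `> s` would therefore be followed by points of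
one constant norm `< s` forever, which periodicity forbids. With all norms `≤ s`, the three cases
show that the norm never moves.
-/

open IsUltrametricDist

section RationalMap

variable {K : Type*} [NormedField K] [IsUltrametricDist K] {a x : K}

def rationalMap (a x : K) : K := a * x / (x ^ 2 + a)

theorem norm_rationalMap_lt_sqrt (ha : a ≠ 0) (hx : √‖a‖ < ‖x‖) :
    ‖rationalMap a x‖ < √‖a‖ := by
  have hx0 : 0 < ‖x‖ := (Real.sqrt_nonneg _).trans_lt hx
  have hsq : ‖a‖ < ‖x ^ 2‖ := by rw [norm_pow]; exact (Real.sqrt_lt' hx0).1 hx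
  have hden : ‖x ^ 2 + a‖ = ‖x‖ ^ 2 := by
    rw [norm_add_eq_max_of_norm_ne_norm hsq.ne', max_eq_left hsq.le, norm_pow]
  have hs : 0 < √‖a‖ := Real.sqrt_pos.2 (norm_pos_iff.2 ha)
  rw [rationalMap, norm_div, norm_mul, hden, div_lt_iff₀ (by positivity)]
  calc ‖a‖ * ‖x‖ = √‖a‖ * √‖a‖ * ‖x‖ := by rw [Real.mul_self_sqrt (norm_nonneg a)]
    _ < √‖a‖ * ‖x‖ * ‖x‖ := by gcongr
    _ = √‖a‖ * ‖x‖ ^ 2 := by ring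

theorem norm_rationalMap_of_lt_sqrt (hx : ‖x‖ < √‖a‖) : ‖rationalMap a x‖ = ‖x‖ := by
  have hsq : ‖x ^ 2‖ < ‖a‖ := by rw [norm_pow]; exact (Real.lt_sqrt (norm_nonneg x)).1 hx
  have ha : ‖a‖ ≠ 0 := ((norm_nonneg _).trans_lt hsq).ne'
  rw [rationalMap, norm_div, norm_mul,
    norm_add_eq_max_of_norm_ne_norm hsq.ne, max_eq_right hsq.le, mul_div_cancel_left₀ _ ha]

theorem sqrt_le_norm_rationalMap (hx : ‖x‖ = √‖a‖) (hden : x ^ 2 + a ≠ 0) :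
    √‖a‖ ≤ ‖rationalMap a x‖ := by
  have hle : ‖x ^ 2 + a‖ ≤ ‖a‖ := (norm_add_le_max _ _).trans <| by
    rw [norm_pow, hx, Real.sq_sqrt (norm_nonneg a), max_self]
  rw [rationalMap, norm_div, norm_mul, hx, le_div_iff₀ (norm_pos_iff.2 hden), mul_comm ‖a‖]
  gcongr

end RationalMap

section PeriodicSequence

variable {u : ℕ → ℝ} {s : ℝ} {k : ℕ}

theorem eq_of_forall_lt_imp_succ_eq (h_lt : ∀ i, u i < s → u (i + 1) = u i) {i : ℕ}
    (hi : u i < s) (n : ℕ) : u (i + n) = u i := by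
  induction n with
  | zero => rfl
  | succ n ih => rw [← add_assoc, h_lt _ (ih ▸ hi), ih]

theorem Function.Periodic.le_of_gt_imp_succ_lt (hk : 1 ≤ k) (hper : Function.Periodic u k)
    (h_gt : ∀ i, s < u i → u (i + 1) < s) (h_lt : ∀ i, u i < s → u (i + 1) = u i) (i : ℕ) :
    u i ≤ s := by
  by_contra! hi
  have hnext := h_gt i hi
  have hback := eq_of_forall_lt_imp_succ_eq h_lt hnext (k - 1)
  rw [add_assoc, Nat.add_sub_cancel' hk, hper] at hback
  linarith

theorem Function.Periodic.forall_eq_apply_zero_and_le (hk : 1 ≤ k) (hper : Function.Periodic u k)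
    (h_gt : ∀ i, s < u i → u (i + 1) < s) (h_lt : ∀ i, u i < s → u (i + 1) = u i)
    (h_eq : ∀ i, u i = s → s ≤ u (i + 1)) :
    (∀ i, u i = u 0) ∧ ∀ i, u i ≤ s := by
  have hle := hper.le_of_gt_imp_succ_lt hk h_gt h_lt
  have hsucc (i : ℕ) : u (i + 1) = u i := by
    rcases (hle i).lt_or_eq with hi | hi
    · exact h_lt i hi
    · exact hi ▸ (hle (i + 1)).antisymm (h_eq i hi)
  refine ⟨fun i => ?_, hle⟩
  induction i with
  | zero => rfl
  | succ i ih => rw [hsucc, ih]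

end PeriodicSequence

/-- All points on a periodic orbit of f(x) = ax/(x²+a) have the same
p-adic norm, and this common value is ≤ √A where A = |a|. -/
theorem stmt15 (p : ℕ) [Fact p.Prime] (a : ℚ_[p]) (ha : a ≠ 0) (k : ℕ) (hk : 1 ≤ k)
    (y : ℕ → ℚ_[p])
    (hden : ∀ i, (y i) ^ 2 + a ≠ 0)
    (horbit : ∀ i, a * y i / ((y i) ^ 2 + a) = y (i + 1))
    (hper : ∀ i, y (i + k) = y i) :
    (∀ i j, ‖y i‖ = ‖y j‖) ∧ ‖y 0‖ ≤ Real.sqrt ‖a‖ := by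
  have hnorm_per : Function.Periodic (fun i => ‖y i‖) k := fun i => congrArg norm (hper i)
  obtain ⟨hconst, hle⟩ := hnorm_per.forall_eq_apply_zero_and_le (s := √‖a‖) hk
    (fun i hi => horbit i ▸ norm_rationalMap_lt_sqrt ha hi)
    (fun i hi => horbit i ▸ norm_rationalMap_of_lt_sqrt hi)
    (fun i hi => horbit i ▸ sqrt_le_norm_rationalMap hi (hden i))
  exact ⟨fun i j => (hconst i).trans (hconst j).symm, hle 0⟩
end

section
/- Let f(x) = ax/(x²+a) over ℚ_p with a ≠ 0, suppose t = √(−2a) exists in ℚ_p, and let g = f∘f. Then g'(t) = 9 and g'(−t) = 9. Consequently |g'(±t)|_p = 1 for p ≠ 3 and |g'(±t)|_3 = 1/9, so the 2-cycle {t, −t} is indifferent for p ≠ 3 and attracting for p = 3. -/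
/-!
With `f x = a * x / (x ^ 2 + a)`, the relation `t ^ 2 = -2a` gives `t ^ 2 + a = -a`, so
`f (±t) = ∓t` and `{t, -t}` is a 2-cycle. At both points the quotient rule gives `f' = 3`,
hence `(f ∘ f)' = 3 * 3 = 9` by the chain rule, and `‖9‖ = ‖3‖ ^ 2` is `1` unless `p = 3`.
-/

theorem sq_add_eq_neg_of_sq_eq {R : Type*} [CommRing R] {a s : R} (hs : s ^ 2 = -(2 * a)) :
    s ^ 2 + a = -a := by
  rw [hs]; ring

theorem div_sq_add_eq_neg_of_sq_eq {K : Type*} [Field K] {a s : K} (ha : a ≠ 0)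
    (hs : s ^ 2 = -(2 * a)) : a * s / (s ^ 2 + a) = -s := by
  rw [sq_add_eq_neg_of_sq_eq hs]
  field_simp

section

variable {𝕜 : Type*} [NontriviallyNormedField 𝕜] {a s : 𝕜}

theorem hasDerivAt_div_sq_add_of_sq_eq (ha : a ≠ 0) (hs : s ^ 2 = -(2 * a)) :
    HasDerivAt (fun x : 𝕜 => a * x / (x ^ 2 + a)) 3 s := by
  have hden : s ^ 2 + a ≠ 0 := by
    rw [sq_add_eq_neg_of_sq_eq hs]; exact neg_ne_zero.mpr ha
  have hquot := ((hasDerivAt_id' s).const_mul a).div ((hasDerivAt_pow 2 s).add_const a) hden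
  refine hquot.congr_deriv ?_
  rw [div_eq_iff (pow_ne_zero 2 hden)]
  linear_combination (-(3 * s ^ 2 + a)) * hs

theorem hasDerivAt_div_sq_add_comp_self_of_sq_eq (ha : a ≠ 0) (hs : s ^ 2 = -(2 * a)) :
    HasDerivAt (fun x : 𝕜 => a * (a * x / (x ^ 2 + a)) / ((a * x / (x ^ 2 + a)) ^ 2 + a)) 9 s := by
  have hinner := hasDerivAt_div_sq_add_of_sq_eq ha hs
  have houter := hasDerivAt_div_sq_add_of_sq_eq ha (s := -s) (by rwa [neg_sq])
  rw [← div_sq_add_eq_neg_of_sq_eq ha hs] at houter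
  have hcomp := houter.comp s hinner
  exact hcomp.congr_deriv (by norm_num)

end

namespace Padic

variable {p : ℕ} [Fact p.Prime]

theorem norm_natCast_pow_eq_one {q : ℕ} (hq : q.Prime) (hpq : p ≠ q) (n : ℕ) :
    ‖((q ^ n : ℕ) : ℚ_[p])‖ = 1 := by
  rw [norm_natCast_eq_one_iff]
  exact ((Nat.coprime_primes Fact.out hq).mpr hpq).pow_right n

end Padic

/-- g = f∘f has derivative 9 at the 2-periodic points ±t, t = √(−2a);
hence the 2-cycle is indifferent for p ≠ 3 (|9|_p = 1) and attracting for p = 3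
(|9|₃ = 1/9). -/
theorem stmt17 (p : ℕ) [Fact p.Prime] (a : ℚ_[p]) (ha : a ≠ 0) (t : ℚ_[p])
    (ht : t ^ 2 = -(2 * a)) :
    HasDerivAt
      (fun x : ℚ_[p] => a * (a * x / (x ^ 2 + a)) / ((a * x / (x ^ 2 + a)) ^ 2 + a)) 9 t ∧
    HasDerivAt
      (fun x : ℚ_[p] => a * (a * x / (x ^ 2 + a)) / ((a * x / (x ^ 2 + a)) ^ 2 + a)) 9 (-t) ∧
    (p ≠ 3 → ‖(9 : ℚ_[p])‖ = 1) ∧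
    (p = 3 → ‖(9 : ℚ_[p])‖ = 1 / 9) := by
  refine ⟨hasDerivAt_div_sq_add_comp_self_of_sq_eq ha ht,
    hasDerivAt_div_sq_add_comp_self_of_sq_eq ha (by rwa [neg_sq]), fun hp => ?_, fun hp => ?_⟩
  · simpa using Padic.norm_natCast_pow_eq_one Nat.prime_three hp 2
  · subst hp
    have h3 := Padic.norm_p_pow (p := 3) 2
    norm_num at h3 ⊢
    exact h3
end
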